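/- arXiv:1604.05243 — 8 statements merged into one kernel-verified Lean document; each statement's English description precedes it below -/
import Mathlib

section
/- Let A be a symmetric mechanism for two items. Then A is strategyproof if and only if both of the following hold: (a) for every fixed b2 ∈ [0,1], the function b1 ↦ û^A(b1,b2) is convex on [0,1]; and (b) for every fixed b2 ∈ [0,1] and every t1 ∈ [0,1], the number z := A(t1,b2) − A(1−t1,1−b2) is a subgradient of b1 ↦ û^A(b1,b2) at b1 = t1, i.e. for all b1 ∈ [0,1], û^A(b1,b2) ≥ û^A(t1,b2) + z·(b1 − t1). -/
/-- The utility attained by agent 1 in the symmetric two-item mechanism described by `A`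
when her true utility vector is `(b1, 1-b1)`, she bids truthfully, and agent 2 bids `b2`. -/
def uhat (A : ℝ → ℝ → ℝ) (b1 b2 : ℝ) : ℝ :=
  b1 * A b1 b2 + (1 - b1) * A (1 - b1) (1 - b2)

/-- Strategyproofness of the symmetric two-item mechanism described by `A`. -/
def StrategyProof (A : ℝ → ℝ → ℝ) : Prop :=
  ∀ b1 ∈ Set.Icc (0 : ℝ) 1, ∀ b2 ∈ Set.Icc (0 : ℝ) 1, ∀ t1 ∈ Set.Icc (0 : ℝ) 1,
    uhat A b1 b2 ≥ b1 * A t1 b2 + (1 - b1) * A (1 - t1) (1 - b2)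


private lemma key_id (A : ℝ → ℝ → ℝ) (b1 b2 t1 : ℝ) :
    b1 * A t1 b2 + (1 - b1) * A (1 - t1) (1 - b2)
      = uhat A t1 b2 + (A t1 b2 - A (1 - t1) (1 - b2)) * (b1 - t1) := by
  unfold uhat; ring

/-- Rochet's characterization: a symmetric two-item mechanism `A` is strategyproof iff
(a) for every fixed `b2`, `b1 ↦ û^A(b1,b2)` is convex on `[0,1]`, and
(b) `A(t1,b2) − A(1−t1,1−b2)` is a subgradient of `b1 ↦ û^A(b1,b2)` at `b1 = t1`. -/
theorem sp_iff_convex_and_subgradient (A : ℝ → ℝ → ℝ) :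
    StrategyProof A ↔
      ((∀ b2 ∈ Set.Icc (0 : ℝ) 1,
          ConvexOn ℝ (Set.Icc (0 : ℝ) 1) (fun b1 => uhat A b1 b2)) ∧
       (∀ b2 ∈ Set.Icc (0 : ℝ) 1, ∀ t1 ∈ Set.Icc (0 : ℝ) 1, ∀ b1 ∈ Set.Icc (0 : ℝ) 1,
          uhat A b1 b2 ≥ uhat A t1 b2 + (A t1 b2 - A (1 - t1) (1 - b2)) * (b1 - t1))) := by
  constructor
  · intro hSP
    have hb : ∀ b2 ∈ Set.Icc (0 : ℝ) 1, ∀ t1 ∈ Set.Icc (0 : ℝ) 1, ∀ b1 ∈ Set.Icc (0 : ℝ) 1,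
        uhat A b1 b2 ≥ uhat A t1 b2 + (A t1 b2 - A (1 - t1) (1 - b2)) * (b1 - t1) := by
      intro b2 hb2 t1 ht1 b1 hb1
      have := hSP b1 hb1 b2 hb2 t1 ht1
      rw [key_id A b1 b2 t1] at this
      exact this
    refine ⟨?_, hb⟩
    intro b2 hb2
    refine ⟨convex_Icc 0 1, ?_⟩
    intro x hx y hy a b ha hb' hab
    have hc : a • x + b • y ∈ Set.Icc (0 : ℝ) 1 :=
      (convex_Icc 0 1) hx hy ha hb' hab
    have h1 := hb b2 hb2 _ hc x hx
    have h2 := hb b2 hb2 _ hc y hy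
    simp only [smul_eq_mul] at *
    set z := A (a * x + b * y) b2 - A (1 - (a * x + b * y)) (1 - b2) with hz
    have h0 : a * (z * (x - (a * x + b * y))) + b * (z * (y - (a * x + b * y))) = 0 := by
      linear_combination (-(z * (a * x + b * y))) * hab
    have h3 : a * uhat A (a * x + b * y) b2 + b * uhat A (a * x + b * y) b2
        = uhat A (a * x + b * y) b2 := by
      linear_combination (uhat A (a * x + b * y) b2) * hab
    nlinarith [mul_le_mul_of_nonneg_left h1 ha, mul_le_mul_of_nonneg_left h2 hb', h0, h3]
  · rintro ⟨-, hb⟩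
    intro b1 hb1 b2 hb2 t1 ht1
    rw [key_id A b1 b2 t1]
    exact hb b2 hb2 t1 ht1 b1 hb1
end

section
/- Let A be a symmetric mechanism for two items. Suppose there is a finite set S ⊆ [0,1] with {1−s : s ∈ S} = S such that: for every fixed b2 ∈ [0,1], the function b1 ↦ A(b1,b2) is monotone increasing and continuous on [0,1] and continuously differentiable at every point of [0,1] \ S; and for all t1 ∈ [0,1] \ S and all t2 ∈ [0,1], the equality t1·(∂A/∂b1)(t1,t2) = (1−t1)·(∂A/∂b1)(1−t1,1−t2) holds, where ∂A/∂b1 denotes the partial derivative of A with respect to its first argument. Then A is strategyproof. -/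
open Set

/-- A continuous function on `[a,b]` with nonnegative derivative off a finite set is monotone. -/
lemma monotoneOn_of_finite_exceptions {S : Set ℝ} (hS : S.Finite) :
    ∀ (f f' : ℝ → ℝ) (a b : ℝ), ContinuousOn f (Icc a b) →
      (∀ x ∈ Ioo a b \ S, HasDerivWithinAt f (f' x) (Ioo a b) x) →
      (∀ x ∈ Ioo a b \ S, 0 ≤ f' x) → MonotoneOn f (Icc a b) := by
  refine Set.Finite.induction_on (motive := fun S _ => ∀ (f f' : ℝ → ℝ) (a b : ℝ),
      ContinuousOn f (Icc a b) →
      (∀ x ∈ Ioo a b \ S, HasDerivWithinAt f (f' x) (Ioo a b) x) →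
      (∀ x ∈ Ioo a b \ S, 0 ≤ f' x) → MonotoneOn f (Icc a b)) S hS ?_ ?_
  · intro f f' a b hc hd hpos
    refine monotoneOn_of_hasDerivWithinAt_nonneg (f' := f') (convex_Icc a b) hc ?_ ?_
    · intro x hx
      rw [interior_Icc] at hx ⊢
      exact hd x ⟨hx, notMem_empty x⟩
    · intro x hx
      rw [interior_Icc] at hx
      exact hpos x ⟨hx, notMem_empty x⟩
  · intro c T hcT hT IH f f' a b hc hd hpos
    by_cases hcab : c ∈ Ioo a b
    · have h1 : MonotoneOn f (Icc a c) := by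
        refine IH f f' a c (hc.mono (Icc_subset_Icc le_rfl hcab.2.le)) ?_ ?_
        · intro x hx
          have hx' : x ∈ Ioo a b \ insert c T :=
            ⟨⟨hx.1.1, hx.1.2.trans hcab.2⟩, by
              simp only [mem_insert_iff, not_or]
              exact ⟨ne_of_lt hx.1.2, hx.2⟩⟩
          exact (hd x hx').mono (Ioo_subset_Ioo le_rfl hcab.2.le)
        · intro x hx
          exact hpos x ⟨⟨hx.1.1, hx.1.2.trans hcab.2⟩, by
            simp only [mem_insert_iff, not_or]
            exact ⟨ne_of_lt hx.1.2, hx.2⟩⟩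
      have h2 : MonotoneOn f (Icc c b) := by
        refine IH f f' c b (hc.mono (Icc_subset_Icc hcab.1.le le_rfl)) ?_ ?_
        · intro x hx
          have hx' : x ∈ Ioo a b \ insert c T :=
            ⟨⟨hcab.1.trans hx.1.1, hx.1.2⟩, by
              simp only [mem_insert_iff, not_or]
              exact ⟨(ne_of_gt hx.1.1), hx.2⟩⟩
          exact (hd x hx').mono (Ioo_subset_Ioo hcab.1.le le_rfl)
        · intro x hx
          exact hpos x ⟨⟨hcab.1.trans hx.1.1, hx.1.2⟩, by
            simp only [mem_insert_iff, not_or]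
            exact ⟨(ne_of_gt hx.1.1), hx.2⟩⟩
      intro x hx y hy hxy
      rcases le_total y c with hyc | hcy
      · exact h1 ⟨hx.1, hxy.trans hyc⟩ ⟨hy.1, hyc⟩ hxy
      · rcases le_total x c with hxc | hcx
        · exact (h1 ⟨hx.1, hxc⟩ ⟨hcab.1.le, le_rfl⟩ hxc).trans
            (h2 ⟨le_rfl, hcab.2.le⟩ ⟨hcy, hy.2⟩ hcy)
        · exact h2 ⟨hcx, hx.2⟩ ⟨hcx.trans hxy, hy.2⟩ hxy
    · refine IH f f' a b hc ?_ ?_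
      · intro x hx
        refine hd x ⟨hx.1, ?_⟩
        simp only [mem_insert_iff, not_or]
        exact ⟨fun h => hcab (h ▸ hx.1), hx.2⟩
      · intro x hx
        refine hpos x ⟨hx.1, ?_⟩
        simp only [mem_insert_iff, not_or]
        exact ⟨fun h => hcab (h ▸ hx.1), hx.2⟩

/-- The derivative (within `[0,1]`) of a function monotone on `[0,1]` is nonnegative. -/
lemma deriv_nonneg_of_monotoneOn {f : ℝ → ℝ} {d t : ℝ} (ht : t ∈ Icc (0:ℝ) 1)
    (hm : MonotoneOn f (Icc (0:ℝ) 1)) (hd : HasDerivWithinAt f d (Icc (0:ℝ) 1) t) : 0 ≤ d := by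
  rw [hasDerivWithinAt_iff_tendsto_slope] at hd
  have hne : (nhdsWithin t (Icc (0:ℝ) 1 \ {t})).NeBot := by
    rcases lt_or_eq_of_le ht.2 with h1 | h1
    · have hsub : Ioc t 1 ⊆ Icc (0:ℝ) 1 \ {t} := fun z hz =>
        ⟨⟨ht.1.trans hz.1.le, hz.2⟩, ne_of_gt hz.1⟩
      exact (left_nhdsWithin_Ioc_neBot h1).mono (nhdsWithin_mono _ hsub)
    · have h0 : (0:ℝ) < t := h1 ▸ zero_lt_one
      have hsub : Ico 0 t ⊆ Icc (0:ℝ) 1 \ {t} := fun z hz =>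
        ⟨⟨hz.1, hz.2.le.trans ht.2⟩, ne_of_lt hz.2⟩
      exact (right_nhdsWithin_Ico_neBot h0).mono (nhdsWithin_mono _ hsub)
  refine ge_of_tendsto hd (Filter.eventually_of_mem self_mem_nhdsWithin ?_)
  intro z hz
  rcases lt_or_gt_of_ne hz.2 with hlt | hgt
  · have : f z ≤ f t := hm hz.1 ht hlt.le
    rw [slope_def_field]
    exact div_nonneg_of_nonpos (by linarith) (by linarith)
  · have : f t ≤ f z := hm ht hz.1 hgt.le
    rw [slope_def_field]
    exact div_nonneg (by linarith) (by linarith)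

/-- Sufficient conditions for strategyproofness: if there is a finite symmetric exceptional
set `S ⊆ [0,1]` (i.e. `{1−s : s ∈ S} = S`) such that for every fixed `b2 ∈ [0,1]` the map
`b1 ↦ A(b1,b2)` is monotone increasing and continuous on `[0,1]` and continuously
differentiable on `[0,1] \ S` (with partial derivative `A'` w.r.t. the first argument),
and `t1·(∂A/∂b1)(t1,t2) = (1−t1)·(∂A/∂b1)(1−t1,1−t2)` holds for all `t1 ∈ [0,1] \ S` and
`t2 ∈ [0,1]`, then `A` is strategyproof. -/
theorem sufficient_conditions_for_sp (A A' : ℝ → ℝ → ℝ) (S : Set ℝ)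
    (hSfin : S.Finite) (hSsub : S ⊆ Set.Icc (0 : ℝ) 1)
    (hSsym : (fun s => 1 - s) '' S = S)
    (hmono : ∀ b2 ∈ Set.Icc (0 : ℝ) 1,
      MonotoneOn (fun b1 => A b1 b2) (Set.Icc (0 : ℝ) 1))
    (hcont : ∀ b2 ∈ Set.Icc (0 : ℝ) 1,
      ContinuousOn (fun b1 => A b1 b2) (Set.Icc (0 : ℝ) 1))
    (hderiv : ∀ b2 ∈ Set.Icc (0 : ℝ) 1, ∀ t1 ∈ Set.Icc (0 : ℝ) 1 \ S,
      HasDerivWithinAt (fun b1 => A b1 b2) (A' t1 b2) (Set.Icc (0 : ℝ) 1) t1)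
    (hderivCont : ∀ b2 ∈ Set.Icc (0 : ℝ) 1,
      ContinuousOn (fun t1 => A' t1 b2) (Set.Icc (0 : ℝ) 1 \ S))
    (heq : ∀ t1 ∈ Set.Icc (0 : ℝ) 1 \ S, ∀ t2 ∈ Set.Icc (0 : ℝ) 1,
      t1 * A' t1 t2 = (1 - t1) * A' (1 - t1) (1 - t2)) :
    StrategyProof A := by
  intro b1 hb1 b2 hb2 t1 ht1
  -- symmetry of S
  have hSmem : ∀ s ∈ S, (1:ℝ) - s ∈ S := fun s hs => hSsym ▸ ⟨s, hs, rfl⟩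
  have hb2' : (1:ℝ) - b2 ∈ Icc (0:ℝ) 1 := ⟨by linarith [hb2.2], by linarith [hb2.1]⟩
  have hflip : ∀ t ∈ Icc (0:ℝ) 1, (1:ℝ) - t ∈ Icc (0:ℝ) 1 :=
    fun t ht => ⟨by linarith [ht.2], by linarith [ht.1]⟩
  set g : ℝ → ℝ := fun t => b1 * A t b2 + (1 - b1) * A (1 - t) (1 - b2) with hg
  set g' : ℝ → ℝ := fun t => b1 * A' t b2 - (1 - b1) * A' (1 - t) (1 - b2) with hg'
  -- continuity of g
  have hgc : ContinuousOn g (Icc (0:ℝ) 1) := by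
    apply ContinuousOn.add
    · exact continuousOn_const.mul (hcont b2 hb2)
    · refine continuousOn_const.mul ?_
      exact (hcont (1 - b2) hb2').comp
        ((continuous_const.sub continuous_id).continuousOn) hflip
  -- derivative of g
  have hgd : ∀ t ∈ Icc (0:ℝ) 1 \ S, HasDerivWithinAt g (g' t) (Icc (0:ℝ) 1) t := by
    intro t ht
    have ht1' : (1:ℝ) - t ∈ Icc (0:ℝ) 1 \ S := by
      refine ⟨hflip t ht.1, fun hmem => ht.2 ?_⟩
      have := hSmem _ hmem
      simpa using this
    have d1 : HasDerivWithinAt (fun x => A x b2) (A' t b2) (Icc (0:ℝ) 1) t :=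
      hderiv b2 hb2 t ht
    have dinner : HasDerivWithinAt (fun x : ℝ => 1 - x) (-1) (Icc (0:ℝ) 1) t := by
      simpa using (hasDerivWithinAt_id t (Icc (0:ℝ) 1)).const_sub 1
    have d2 : HasDerivWithinAt (fun x => A (1 - x) (1 - b2))
        (A' (1 - t) (1 - b2) * (-1)) (Icc (0:ℝ) 1) t :=
      (hderiv (1 - b2) hb2' (1 - t) ht1').comp t dinner hflip
    have := (d1.const_mul b1).add (d2.const_mul (1 - b1))
    convert (show HasDerivWithinAt g _ (Icc (0:ℝ) 1) t from this) using 1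
    show b1 * A' t b2 - (1 - b1) * A' (1 - t) (1 - b2) = _
    ring
  -- nonnegativity of A'
  have hA'nonneg : ∀ c ∈ Icc (0:ℝ) 1, ∀ t ∈ Icc (0:ℝ) 1 \ S, 0 ≤ A' t c :=
    fun c hc t ht => deriv_nonneg_of_monotoneOn ht.1 (hmono c hc) (hderiv c hc t ht)
  -- monotone on [0, b1]
  have hmonoLow : MonotoneOn g (Icc 0 b1) := by
    refine monotoneOn_of_finite_exceptions hSfin g g' 0 b1
      (hgc.mono (Icc_subset_Icc le_rfl hb1.2)) ?_ ?_
    · intro x hx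
      have hx' : x ∈ Icc (0:ℝ) 1 \ S :=
        ⟨⟨hx.1.1.le, hx.1.2.le.trans hb1.2⟩, hx.2⟩
      exact (hgd x hx').mono ((Ioo_subset_Icc_self).trans (Icc_subset_Icc le_rfl hb1.2))
    · intro x hx
      have hxI : x ∈ Icc (0:ℝ) 1 \ S := ⟨⟨hx.1.1.le, hx.1.2.le.trans hb1.2⟩, hx.2⟩
      have hpos := hA'nonneg b2 hb2 x hxI
      have heqx := heq x hxI b2 hb2
      have hx1 : x < 1 := lt_of_lt_of_le hx.1.2 hb1.2
      simp only [hg']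
      nlinarith [hx.1.2, hx.1.1]
  -- antitone on [b1, 1]
  have hmonoHigh : MonotoneOn (fun t => -g t) (Icc b1 1) := by
    refine monotoneOn_of_finite_exceptions hSfin (fun t => -g t) (fun t => -(g' t)) b1 1
      ((hgc.mono (Icc_subset_Icc hb1.1 le_rfl)).neg) ?_ ?_
    · intro x hx
      have hx' : x ∈ Icc (0:ℝ) 1 \ S :=
        ⟨⟨hb1.1.trans hx.1.1.le, hx.1.2.le⟩, hx.2⟩
      exact ((hgd x hx').neg).mono ((Ioo_subset_Icc_self).trans (Icc_subset_Icc hb1.1 le_rfl))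
    · intro x hx
      have hxI : x ∈ Icc (0:ℝ) 1 \ S := ⟨⟨hb1.1.trans hx.1.1.le, hx.1.2.le⟩, hx.2⟩
      have hpos := hA'nonneg b2 hb2 x hxI
      have heqx := heq x hxI b2 hb2
      simp only [hg']
      nlinarith [hx.1.1, hx.1.2]
  -- conclude
  have key : g t1 ≤ g b1 := by
    rcases le_total t1 b1 with h | h
    · exact hmonoLow ⟨ht1.1, h⟩ ⟨hb1.1, le_rfl⟩ h
    · have h2 := hmonoHigh ⟨le_rfl, hb1.2⟩ ⟨h, ht1.2⟩ h
      simp only [neg_le_neg_iff] at h2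
      exact h2
  simpa [uhat, hg, ge_iff_le] using key
end

section
/- Let A : [0,1]×[0,1] → ℝ be such that for every fixed b2 ∈ [0,1] the function b1 ↦ A(b1,b2) is monotone increasing, continuous, and continuously differentiable on all of [0,1], and suppose t1·(∂A/∂b1)(t1,t2) = (1−t1)·(∂A/∂b1)(1−t1,1−t2) for all t1, t2 ∈ [0,1], where ∂A/∂b1 denotes the partial derivative of A with respect to its first argument. Then for every fixed b2 ∈ [0,1], the function b1 ↦ û^A(b1,b2) is convex on [0,1]. -/
/-- If for every fixed `b2 ∈ [0,1]` the map `b1 ↦ A(b1,b2)` is monotone increasing,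
continuous, and continuously differentiable on all of `[0,1]` (with partial derivative
`A'` w.r.t. the first argument), and
`t1·(∂A/∂b1)(t1,t2) = (1−t1)·(∂A/∂b1)(1−t1,1−t2)` for all `t1, t2 ∈ [0,1]`, then for
every fixed `b2 ∈ [0,1]` the function `b1 ↦ û^A(b1,b2)` is convex on `[0,1]`. -/
theorem uhat_convex (A A' : ℝ → ℝ → ℝ)
    (hmono : ∀ b2 ∈ Set.Icc (0 : ℝ) 1,
      MonotoneOn (fun b1 => A b1 b2) (Set.Icc (0 : ℝ) 1))
    (hcont : ∀ b2 ∈ Set.Icc (0 : ℝ) 1,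
      ContinuousOn (fun b1 => A b1 b2) (Set.Icc (0 : ℝ) 1))
    (hderiv : ∀ b2 ∈ Set.Icc (0 : ℝ) 1, ∀ t1 ∈ Set.Icc (0 : ℝ) 1,
      HasDerivWithinAt (fun b1 => A b1 b2) (A' t1 b2) (Set.Icc (0 : ℝ) 1) t1)
    (hderivCont : ∀ b2 ∈ Set.Icc (0 : ℝ) 1,
      ContinuousOn (fun t1 => A' t1 b2) (Set.Icc (0 : ℝ) 1))
    (heq : ∀ t1 ∈ Set.Icc (0 : ℝ) 1, ∀ t2 ∈ Set.Icc (0 : ℝ) 1,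
      t1 * A' t1 t2 = (1 - t1) * A' (1 - t1) (1 - t2)) :
    ∀ b2 ∈ Set.Icc (0 : ℝ) 1,
      ConvexOn ℝ (Set.Icc (0 : ℝ) 1) (fun b1 => uhat A b1 b2) := by
  intro b2 hb2
  have hb2' : (1 : ℝ) - b2 ∈ Set.Icc (0 : ℝ) 1 := by
    constructor <;> [linarith [hb2.2]; linarith [hb2.1]]
  have hmap : ∀ x ∈ Set.Icc (0:ℝ) 1, (1 : ℝ) - x ∈ Set.Icc (0:ℝ) 1 := fun x hx =>
    ⟨by linarith [hx.2], by linarith [hx.1]⟩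
  set g : ℝ → ℝ := fun b1 => A b1 b2 - A (1 - b1) (1 - b2) with hg
  have key : ∀ x ∈ Set.Ioo (0:ℝ) 1, HasDerivAt (fun b1 => uhat A b1 b2) (g x) x := by
    intro x hx
    have hxI : x ∈ Set.Icc (0:ℝ) 1 := Set.Ioo_subset_Icc_self hx
    have hxI' : (1:ℝ) - x ∈ Set.Icc (0:ℝ) 1 := hmap x hxI
    have hnb : Set.Icc (0:ℝ) 1 ∈ nhds x := Icc_mem_nhds hx.1 hx.2
    have hnb' : Set.Icc (0:ℝ) 1 ∈ nhds ((1:ℝ) - x) := Icc_mem_nhds (by linarith [hx.2]) (by linarith [hx.1])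
    have h1 : HasDerivAt (fun b1 => A b1 b2) (A' x b2) x :=
      (hderiv b2 hb2 x hxI).hasDerivAt hnb
    have h2' : HasDerivAt (fun b1 => A b1 (1 - b2)) (A' (1 - x) (1 - b2)) (1 - x) :=
      (hderiv (1 - b2) hb2' (1 - x) hxI').hasDerivAt hnb'
    have hlin : HasDerivAt (fun b1 : ℝ => 1 - b1) (-1) x := by
      simpa using (hasDerivAt_id' x).const_sub (1:ℝ)
    have h2 : HasDerivAt (fun b1 => A (1 - b1) (1 - b2)) (A' (1 - x) (1 - b2) * (-1)) x :=
      HasDerivAt.comp x h2' hlin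
    have h3 : HasDerivAt (fun b1 => uhat A b1 b2)
        (1 * A x b2 + x * A' x b2 + ((-1) * A (1 - x) (1 - b2) + (1 - x) * (A' (1 - x) (1 - b2) * (-1)))) x := by
      exact ((hasDerivAt_id x).mul h1).add ((hlin.mul h2))
    have heqx := heq x hxI b2 hb2
    convert h3 using 1
    simp only [hg]
    ring_nf
    ring_nf at heqx
    linarith [heqx]
  have hderivg : ∀ x ∈ Set.Ioo (0:ℝ) 1, deriv (fun b1 => uhat A b1 b2) x = g x :=
    fun x hx => (key x hx).deriv
  apply MonotoneOn.convexOn_of_deriv (convex_Icc 0 1)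
  · -- continuity
    have hc1 : ContinuousOn (fun b1 => b1 * A b1 b2) (Set.Icc 0 1) :=
      continuousOn_id.mul (hcont b2 hb2)
    have hc2 : ContinuousOn (fun b1 => (1 - b1) * A (1 - b1) (1 - b2)) (Set.Icc 0 1) := by
      apply ContinuousOn.mul
      · exact (continuous_const.sub continuous_id).continuousOn
      · exact (hcont (1 - b2) hb2').comp
          (continuous_const.sub continuous_id).continuousOn hmap
    exact hc1.add hc2
  · rw [interior_Icc]
    intro x hx
    exact ((key x hx).differentiableAt).differentiableWithinAt
  · rw [interior_Icc]
    intro x hx y hy hxy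
    rw [hderivg x hx, hderivg y hy]
    have hxI : x ∈ Set.Icc (0:ℝ) 1 := Set.Ioo_subset_Icc_self hx
    have hyI : y ∈ Set.Icc (0:ℝ) 1 := Set.Ioo_subset_Icc_self hy
    have e1 : A x b2 ≤ A y b2 := hmono b2 hb2 hxI hyI hxy
    have e2 : A (1 - y) (1 - b2) ≤ A (1 - x) (1 - b2) :=
      hmono (1 - b2) hb2' (hmap y hyI) (hmap x hxI) (by linarith)
    simp only [hg]
    linarith
end

section
/- Let f : [0,1] → ℝ be defined piecewise by f(t) = 0 on [0,1/5], f(t) = 5/6 − 1/(6t) − (1/6)·ln(5t) on [1/5,1/2], f(t) = 1/2 − (1/6)·ln(5−5t) on [1/2,4/5], and f(t) = 1/2 on [4/5,1]. Then for every t ∈ (0,1) with t ∉ {1/5, 4/5}, f is differentiable at t and at 1−t, and t·f′(t) = (1−t)·f′(1−t). -/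
/-- The piecewise function `f` from the 5/6-competitive full mechanism for two items. -/
noncomputable def f (t : ℝ) : ℝ :=
  if t ≤ 1/5 then 0
  else if t ≤ 1/2 then 5/6 - 1/(6*t) - (1/6) * Real.log (5*t)
  else if t ≤ 4/5 then 1/2 - (1/6) * Real.log (5 - 5*t)
  else 1/2

lemma hA {t : ℝ} (h : t < 1/5) : HasDerivAt f 0 t := by
  apply (hasDerivAt_const t (0:ℝ)).congr_of_eventuallyEq
  filter_upwards [Iio_mem_nhds h] with x hx
  simp only [f, if_pos (le_of_lt (Set.mem_Iio.1 hx))]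

lemma hE {t : ℝ} (h : 4/5 < t) : HasDerivAt f 0 t := by
  apply (hasDerivAt_const t ((1:ℝ)/2)).congr_of_eventuallyEq
  filter_upwards [Ioi_mem_nhds h] with x hx
  have h1 : ¬ x ≤ 1/5 := by simp only [Set.mem_Ioi] at hx; linarith
  have h2 : ¬ x ≤ 1/2 := by simp only [Set.mem_Ioi] at hx; linarith
  have h3 : ¬ x ≤ 4/5 := by simp only [Set.mem_Ioi] at hx; linarith
  simp only [f, if_neg h1, if_neg h2, if_neg h3]

lemma hg2 {t : ℝ} (ht : 0 < t) :
    HasDerivAt (fun x : ℝ => 5/6 - 1/(6*x) - (1/6) * Real.log (5*x))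
      ((1-t)/(6*t^2)) t := by
  have h6t : (6:ℝ)*t ≠ 0 := by positivity
  have h5t : (5:ℝ)*t ≠ 0 := by positivity
  have hinv : HasDerivAt (fun x : ℝ => (6*x)⁻¹) (-(6*1) / (6*t)^2) t :=
    ((hasDerivAt_id t).const_mul 6).inv h6t
  have hlog : HasDerivAt (fun x : ℝ => Real.log (5*x)) ((5*t)⁻¹ * (5*1)) t :=
    (Real.hasDerivAt_log h5t).comp t ((hasDerivAt_id t).const_mul 5)
  have h := ((hasDerivAt_const t ((5:ℝ)/6)).sub hinv).sub (hlog.const_mul (1/6))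
  have heq : (fun x : ℝ => 5/6 - (6*x)⁻¹ - (1/6) * Real.log (5*x)) =
      (fun x : ℝ => 5/6 - 1/(6*x) - (1/6) * Real.log (5*x)) := by
    funext x; ring
  replace h : HasDerivAt (fun x : ℝ => 5/6 - (6*x)⁻¹ - (1/6) * Real.log (5*x)) _ t := h
  rw [heq] at h
  convert h using 1
  field_simp
  ring

lemma hg3 {t : ℝ} (ht : t < 1) :
    HasDerivAt (fun x : ℝ => 1/2 - (1/6) * Real.log (5 - 5*x))
      (1/(6*(1-t))) t := by
  have h5t : (5:ℝ) - 5*t ≠ 0 := by intro h; nlinarith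
  have hin : HasDerivAt (fun x : ℝ => 5 - 5*x) (0 - 5*1) t :=
    (hasDerivAt_const t (5:ℝ)).sub ((hasDerivAt_id t).const_mul 5)
  have hlog : HasDerivAt (fun x : ℝ => Real.log (5 - 5*x)) ((5-5*t)⁻¹ * (0 - 5*1)) t :=
    by have := (Real.hasDerivAt_log h5t).comp t hin; exact this
  have h := (hasDerivAt_const t ((1:ℝ)/2)).sub (hlog.const_mul (1/6))
  replace h : HasDerivAt (fun x : ℝ => 1/2 - (1/6) * Real.log (5 - 5*x)) _ t := h
  convert h using 1
  have h6 : (6:ℝ)*(1-t) ≠ 0 := by intro h; nlinarith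
  rw [show (5:ℝ) - 5*t = 5*(1-t) by ring]
  field_simp
  ring

lemma hB {t : ℝ} (h1 : 1/5 < t) (h2 : t < 1/2) :
    HasDerivAt f ((1-t)/(6*t^2)) t := by
  apply (hg2 (by linarith)).congr_of_eventuallyEq
  filter_upwards [Ioo_mem_nhds h1 h2] with x hx
  have hx1 : ¬ x ≤ 1/5 := not_le.2 hx.1
  simp only [f, if_neg hx1, if_pos hx.2.le]

lemma hD {t : ℝ} (h1 : 1/2 < t) (h2 : t < 4/5) :
    HasDerivAt f (1/(6*(1-t))) t := by
  apply (hg3 (by linarith)).congr_of_eventuallyEq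
  filter_upwards [Ioo_mem_nhds h1 h2] with x hx
  have hx1 : ¬ x ≤ 1/5 := by push_neg; linarith [hx.1]
  have hx2 : ¬ x ≤ 1/2 := not_le.2 hx.1
  simp only [f, if_neg hx1, if_neg hx2, if_pos hx.2.le]

lemma fval_half : f (1/2) = 1/2 - (1/6) * Real.log (5 - 5*(1/2)) := by
  have : ((1:ℝ)/2 ≤ 1/5) = False := by norm_num
  simp only [f, this, if_false, if_pos le_rfl]
  norm_num

lemma hC : HasDerivAt f (1/3) (1/2 : ℝ) := by
  have h2 : HasDerivWithinAt f (1/3) (Set.Iic (1/2)) (1/2 : ℝ) := by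
    have hg : HasDerivAt (fun x : ℝ => 5/6 - 1/(6*x) - (1/6) * Real.log (5*x))
        (1/3) (1/2 : ℝ) := by
      have := hg2 (t := 1/2) (by norm_num)
      convert this using 1; norm_num
    apply hg.hasDerivWithinAt.congr_of_eventuallyEq
    · filter_upwards [nhdsWithin_le_nhds (Ioi_mem_nhds (by norm_num : (1:ℝ)/5 < 1/2)),
        eventually_mem_nhdsWithin] with x hx1 hx2
      have hx1' : ¬ x ≤ 1/5 := not_le.2 hx1
      simp only [f, if_neg hx1', if_pos (Set.mem_Iic.1 hx2)]
    · have : ¬ ((1:ℝ)/2 ≤ 1/5) := by norm_num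
      simp only [f, if_neg this, if_pos le_rfl]
  have h3 : HasDerivWithinAt f (1/3) (Set.Ici (1/2)) (1/2 : ℝ) := by
    have hg : HasDerivAt (fun x : ℝ => 1/2 - (1/6) * Real.log (5 - 5*x))
        (1/3) (1/2 : ℝ) := by
      have := hg3 (t := 1/2) (by norm_num)
      convert this using 1; norm_num
    apply hg.hasDerivWithinAt.congr_of_eventuallyEq
    · filter_upwards [nhdsWithin_le_nhds (Iio_mem_nhds (by norm_num : (1:ℝ)/2 < 4/5)),
        eventually_mem_nhdsWithin] with x hx1 hx2
      rcases eq_or_lt_of_le (Set.mem_Ici.1 hx2) with h | h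
      · rw [← h, fval_half]
      · have hx1' : ¬ x ≤ 1/5 := by have := Set.mem_Iio.1 hx1; push_neg; linarith
        have hx2' : ¬ x ≤ 1/2 := not_le.2 h
        simp only [f, if_neg hx1', if_neg hx2', if_pos (le_of_lt (Set.mem_Iio.1 hx1))]
    · rw [fval_half]
  have := h2.union h3
  rw [Set.Iic_union_Ici] at this
  exact hasDerivWithinAt_univ.mp this

/-- For every `t ∈ (0,1)` with `t ∉ {1/5, 4/5}`, `f` is differentiable at `t` and at
`1−t`, and `t·f′(t) = (1−t)·f′(1−t)`. -/
theorem f_derivative_relation :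
    ∀ t ∈ Set.Ioo (0 : ℝ) 1, t ≠ 1/5 → t ≠ 4/5 →
      DifferentiableAt ℝ f t ∧ DifferentiableAt ℝ f (1 - t) ∧
      t * deriv f t = (1 - t) * deriv f (1 - t) := by
  intro t ht h15 h45
  obtain ⟨ht0, ht1⟩ := ht
  by_cases c1 : t < 1/5
  · have hd1 := hA c1
    have hd2 := hE (t := 1 - t) (by linarith)
    exact ⟨hd1.differentiableAt, hd2.differentiableAt, by
      rw [hd1.deriv, hd2.deriv]; ring⟩
  have c1' : 1/5 < t := lt_of_le_of_ne (not_lt.1 c1) (Ne.symm h15)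
  by_cases c2 : t < 1/2
  · have hd1 := hB c1' c2
    have hd2 := hD (t := 1 - t) (by linarith) (by linarith)
    refine ⟨hd1.differentiableAt, hd2.differentiableAt, ?_⟩
    rw [hd1.deriv, hd2.deriv]
    have ht0' : t ≠ 0 := ne_of_gt ht0
    rw [sub_sub_cancel]
    field_simp
  by_cases c3 : t = 1/2
  · subst c3
    have h12 : (1:ℝ) - 1/2 = 1/2 := by norm_num
    rw [h12]
    exact ⟨hC.differentiableAt, hC.differentiableAt, by rw [hC.deriv]⟩
  have c2' : 1/2 < t := lt_of_le_of_ne (not_lt.1 c2) (Ne.symm c3)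
  by_cases c4 : t < 4/5
  · have hd1 := hD c2' c4
    have hd2 := hB (t := 1 - t) (by linarith) (by linarith)
    refine ⟨hd1.differentiableAt, hd2.differentiableAt, ?_⟩
    rw [hd1.deriv, hd2.deriv]
    have h1t : (1:ℝ) - t ≠ 0 := by intro h; nlinarith
    field_simp
    ring
  have c4' : 4/5 < t := lt_of_le_of_ne (not_lt.1 c4) (Ne.symm h45)
  have hd1 := hE c4'
  have hd2 := hA (t := 1 - t) (by linarith)
  exact ⟨hd1.differentiableAt, hd2.differentiableAt, by
    rw [hd1.deriv, hd2.deriv]; ring⟩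
end

section
/- Let f : [0,1] → ℝ be defined piecewise by f(t) = 0 on [0,1/5], f(t) = 5/6 − 1/(6t) − (1/6)·ln(5t) on [1/5,1/2], f(t) = 1/2 − (1/6)·ln(5−5t) on [1/2,4/5], and f(t) = 1/2 on [4/5,1], and define A(t1,t2) := f(t1) − f(t2) + 1/2 for t1, t2 ∈ [0,1]. Then A describes a feasible full mechanism: for all t1, t2 ∈ [0,1], A(t1,t2) ≥ 0 and A(t1,t2) + A(t2,t1) = 1. -/
/-- The allocation function of the 5/6-competitive full mechanism. -/
noncomputable def A (t1 t2 : ℝ) : ℝ := f t1 - f t2 + 1/2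

lemma f_bounds (t : ℝ) (h0 : 0 ≤ t) (h1 : t ≤ 1) : 0 ≤ f t ∧ f t ≤ 1/2 := by
  unfold f
  split_ifs with hA hB hC
  · norm_num
  · have ht : 1/5 < t := not_le.mp hA
    have htpos : 0 < t := by linarith
    have h5t : (0:ℝ) < 5 * t := by linarith
    -- log(5t) ≤ 5t - 1
    have hlog_ub : Real.log (5*t) ≤ 5*t - 1 := Real.log_le_sub_one_of_pos h5t
    -- log(5t) ≥ 1 - 1/(5t)
    have hinv : (0:ℝ) < (5*t)⁻¹ := by positivity
    have h2 : Real.log ((5*t)⁻¹) ≤ (5*t)⁻¹ - 1 := Real.log_le_sub_one_of_pos hinv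
    rw [Real.log_inv] at h2
    have hlog_lb : 1 - (5*t)⁻¹ ≤ Real.log (5*t) := by linarith
    have hinv_eq : (5*t)⁻¹ = 1/(5*t) := by rw [one_div]
    constructor
    · -- 0 ≤ 5/6 - 1/(6t) - (1/6) log(5t)
      have key : 1/(6*t) ≤ (5/6) - (1/6) * (5*t - 1) := by
        rw [div_le_iff₀ (by linarith : (0:ℝ) < 6*t)]
        nlinarith [sq_nonneg (t - 1), sq_nonneg (5*t - 1)]
      nlinarith [hlog_ub]
    · have key : 2 ≤ 1/t + (1 - 1/(5*t)) := by
        have : 1/t + (1 - 1/(5*t)) = 1 + 4/(5*t) := by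
          field_simp; ring
        rw [this]
        have : (1:ℝ) ≤ 4/(5*t) := by
          rw [le_div_iff₀ (by linarith : (0:ℝ) < 5*t)]; linarith
        linarith
      have h1t : 1/(6*t) = (1/6) * (1/t) := by field_simp
      rw [hinv_eq] at hlog_lb
      nlinarith
  · have ht : 1/2 < t := not_le.mp hB
    have h5 : (1:ℝ) ≤ 5 - 5*t := by linarith
    have hpos : (0:ℝ) < 5 - 5*t := by linarith
    have hlb : 0 ≤ Real.log (5 - 5*t) := Real.log_nonneg h5
    have hub : Real.log (5 - 5*t) ≤ 5 - 5*t - 1 := Real.log_le_sub_one_of_pos hpos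
    constructor
    · nlinarith
    · nlinarith
  · norm_num

/-- `A` describes a feasible full mechanism: allocations are nonnegative and each item
is always completely allocated. -/
theorem A_feasible_full :
    ∀ t1 ∈ Set.Icc (0 : ℝ) 1, ∀ t2 ∈ Set.Icc (0 : ℝ) 1,
      0 ≤ A t1 t2 ∧ A t1 t2 + A t2 t1 = 1 := by
  intro t1 h1 t2 h2
  obtain ⟨b1l, b1u⟩ := f_bounds t1 h1.1 h1.2
  obtain ⟨b2l, b2u⟩ := f_bounds t2 h2.1 h2.2
  constructor
  · unfold A; linarith
  · unfold A; ring
end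

section
/- For the case with two items, no symmetric strategyproof feasible mechanism is 0.9523-competitive: there is no function A : [0,1]×[0,1] → ℝ such that (i) A(t1,t2) ≥ 0 and A(t1,t2) + A(t2,t1) ≤ 1 for all t1, t2 ∈ [0,1], (ii) A is strategyproof, and (iii) SW^A(t1,t2) ≥ 0.9523·(1 + |t1 − t2|) for all t1, t2 ∈ [0,1]. -/
/-- For two items, no symmetric strategyproof feasible mechanism is
`0.9523`-competitive. -/
theorem no_sp_mechanism_beats_09523 :
    ¬ ∃ A : ℝ → ℝ → ℝ,
      (∀ t1 ∈ Set.Icc (0 : ℝ) 1, ∀ t2 ∈ Set.Icc (0 : ℝ) 1,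
        0 ≤ A t1 t2 ∧ A t1 t2 + A t2 t1 ≤ 1) ∧
      StrategyProof A ∧
      (∀ t1 ∈ Set.Icc (0 : ℝ) 1, ∀ t2 ∈ Set.Icc (0 : ℝ) 1,
        uhat A t1 t2 + uhat A t2 t1 ≥ (9523/10000 : ℝ) * (1 + |t1 - t2|)) := by
  rintro ⟨A, hfeas, hsp, hsw⟩
  have m0 : (0:ℝ) ∈ Set.Icc (0:ℝ) 1 := by constructor <;> norm_num
  have m1 : (1:ℝ) ∈ Set.Icc (0:ℝ) 1 := by constructor <;> norm_num
  have mq : (1/4:ℝ) ∈ Set.Icc (0:ℝ) 1 := by constructor <;> norm_num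
  have m3q : (3/4:ℝ) ∈ Set.Icc (0:ℝ) 1 := by constructor <;> norm_num
  -- nonnegativity of A(0,1/4)
  have hnn : 0 ≤ A 0 (1/4) := (hfeas 0 m0 (1/4) mq).1
  -- feasibility constraints
  have hf1 : A 0 (1/4) + A (1/4) 0 ≤ 1 := (hfeas 0 m0 (1/4) mq).2
  have hf2 : A (1/4) (1/4) + A (1/4) (1/4) ≤ 1 := (hfeas (1/4) mq (1/4) mq).2
  have hf3 : A (3/4) (3/4) + A (3/4) (3/4) ≤ 1 := (hfeas (3/4) m3q (3/4) m3q).2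
  have hf4 : A (3/4) 1 + A 1 (3/4) ≤ 1 := (hfeas (3/4) m3q 1 m1).2
  -- strategyproofness at b1 = 1/4, b2 = 1/4, deviation t1 = 0
  have hsp1 := hsp (1/4) mq (1/4) mq 0 m0
  -- competitiveness at (0, 1/4)
  have hsw1 := hsw 0 m0 (1/4) mq
  rw [show |(0:ℝ) - 1/4| = 1/4 by rw [abs_sub_comm]; norm_num [abs_of_nonneg]] at hsw1
  simp only [uhat] at hsp1 hsw1
  norm_num at hsp1 hsw1
  linarith
end

section
/- Let A : [0,1]×[0,1] → ℝ describe a symmetric strategyproof mechanism for two items with A(t1,t2) ≥ 0 for all t1, t2, and set q := û^A(0, 0.1) (which equals A(1, 0.9)). Then for every t1 ∈ [0,1], û^A(t1, 0.1) ≥ q − q·t1. -/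
/-- If `A` describes a symmetric strategyproof mechanism with nonnegative allocations,
and `q := û^A(0, 0.1)` (which equals `A(1, 0.9)`), then `û^A(t1, 0.1) ≥ q − q·t1` for
every `t1 ∈ [0,1]`. -/
theorem uhat_lower_bound_support1 (A : ℝ → ℝ → ℝ)
    (hnonneg : ∀ t1 ∈ Set.Icc (0 : ℝ) 1, ∀ t2 ∈ Set.Icc (0 : ℝ) 1, 0 ≤ A t1 t2)
    (hSP : StrategyProof A) :
    uhat A 0 (1/10) = A 1 (9/10) ∧
    ∀ t1 ∈ Set.Icc (0 : ℝ) 1,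
      uhat A t1 (1/10) ≥ uhat A 0 (1/10) - uhat A 0 (1/10) * t1 := by
  have heq : uhat A 0 (1/10) = A 1 (9/10) := by
    simp [uhat]; norm_num
  refine ⟨heq, fun t1 ht1 => ?_⟩
  have h1 : (1:ℝ)/10 ∈ Set.Icc (0:ℝ) 1 := by norm_num
  have h0 : (0:ℝ) ∈ Set.Icc (0:ℝ) 1 := by norm_num
  have hsp := hSP t1 ht1 (1/10) h1 0 h0
  have hA0 : 0 ≤ A 0 (1/10) := hnonneg 0 h0 (1/10) h1
  have hA1 : 0 ≤ A 1 (9/10) := hnonneg 1 (by norm_num) (9/10) (by norm_num)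
  have : (1:ℝ) - 0 = 1 := by norm_num
  rw [heq]
  have ht0 := ht1.1
  nlinarith [hsp]
end

section
/- Let h := 0.9523 and let A : [0,1]×[0,1] → ℝ describe a symmetric strategyproof mechanism for two items satisfying A(t1,t2) ≥ 0 and A(t1,t2) + A(t2,t1) ≤ 1 for all t1, t2 ∈ [0,1], and SW^A(t1,t2) ≥ h·(1 + |t1 − t2|) for all t1, t2 ∈ [0,1]. Set q := û^A(0, 0.1). Then for every t1 ∈ [0.1, 1], û^A(t1, 0) ≥ (11/10)·h − q + (11h − 10)·(t1 − 0.1). -/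
/-- Let `h := 0.9523`.  If `A` describes a symmetric strategyproof feasible mechanism
that is `h`-competitive, and `q := û^A(0, 0.1)`, then for every `t1 ∈ [0.1, 1]`,
`û^A(t1, 0) ≥ (11/10)·h − q + (11h − 10)·(t1 − 0.1)`. -/
theorem uhat_lower_bound_support2 (A : ℝ → ℝ → ℝ)
    (hfeas : ∀ t1 ∈ Set.Icc (0 : ℝ) 1, ∀ t2 ∈ Set.Icc (0 : ℝ) 1,
      0 ≤ A t1 t2 ∧ A t1 t2 + A t2 t1 ≤ 1)
    (hSP : StrategyProof A)
    (hcomp : ∀ t1 ∈ Set.Icc (0 : ℝ) 1, ∀ t2 ∈ Set.Icc (0 : ℝ) 1,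
      uhat A t1 t2 + uhat A t2 t1 ≥ (9523/10000 : ℝ) * (1 + |t1 - t2|)) :
    ∀ t1 ∈ Set.Icc (1/10 : ℝ) 1,
      uhat A t1 0 ≥ (11/10) * (9523/10000 : ℝ) - uhat A 0 (1/10) +
        (11 * (9523/10000 : ℝ) - 10) * (t1 - 1/10) := by
  intro t1 ht1
  obtain ⟨ht1l, ht1r⟩ := ht1
  have hmem : t1 ∈ Set.Icc (0:ℝ) 1 := ⟨by linarith, ht1r⟩
  have hSP1 := hSP t1 hmem 0 (by norm_num) (1/10) (by norm_num)
  have hcomp1 := hcomp (1/10) (by norm_num) 0 (by norm_num)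
  have hfeas1 := (hfeas (9/10) (by norm_num) 1 (by norm_num)).2
  have hq : uhat A 0 (1/10) = A 1 (9/10) := by
    simp [uhat]; norm_num
  have hu : uhat A (1/10) 0 = 1/10 * A (1/10) 0 + 9/10 * A (9/10) 1 := by
    simp only [uhat]; norm_num
  have habs : |(1/10 : ℝ) - 0| = 1/10 := by norm_num
  rw [habs, hu, hq] at hcomp1
  have hSP1' : uhat A t1 0 ≥ t1 * A (1/10) 0 + (1 - t1) * A (9/10) 1 := by
    convert hSP1 using 3 <;> norm_num
  have key : A (1/10) 0 - A (9/10) 1 ≥ 11*(9523/10000:ℝ) - 10 := by linarith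
  rw [hq]
  nlinarith [mul_nonneg (by linarith : (0:ℝ) ≤ t1 - 1/10)
    (by linarith : (0:ℝ) ≤ A (1/10) 0 - A (9/10) 1 - (11*(9523/10000:ℝ) - 10))]
end
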